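/- Let X be a nontrivial real normed linear space. Then DW(X) = sup{ (1+t)‖u+v‖ / ‖u+tv‖ : u, v ∈ S_X, 0 < t < 1 }. -/

import Mathlib

/-!
For `‖y‖ ≤ ‖x‖` put `u = x / ‖x‖`, `v = -y / ‖y‖` and `t = ‖y‖ / ‖x‖`. Then
`1 + t = (‖x‖ + ‖y‖) / ‖x‖` and `u + t v = (x - y) / ‖x‖`, so the Dunkl–Williams ratio of
`(x, y)` is `(1 + t)‖u + v‖ / ‖u + t v‖`; conversely `(u, v, t)` arises this way from
`(x, y) = (u, -t v)`. The case `‖x‖ = ‖y‖`, i.e. `t = 1`, gives the value `2`, which is also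
attained with `u = v` and any `t`. So the two sets of values coincide.
-/

section

variable {X : Type*} [NormedAddCommGroup X] [NormedSpace ℝ X]

noncomputable def dunklWilliamsRatio (x y : X) : ℝ :=
  (‖x‖ + ‖y‖) / ‖x - y‖ * ‖NormedSpace.normalize x - NormedSpace.normalize y‖

noncomputable def dunklWilliamsSphereRatio (u v : X) (t : ℝ) : ℝ :=
  (1 + t) * ‖u + v‖ / ‖u + t • v‖

theorem dunklWilliamsRatio_comm (x y : X) : dunklWilliamsRatio x y = dunklWilliamsRatio y x := by
  rw [dunklWilliamsRatio, dunklWilliamsRatio, add_comm, norm_sub_rev,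
    norm_sub_rev (NormedSpace.normalize x)]

theorem dunklWilliamsRatio_of_norm_eq {x y : X} (hxy : x ≠ y) (h : ‖x‖ = ‖y‖) :
    dunklWilliamsRatio x y = 2 := by
  have hxy' : ‖x - y‖ ≠ 0 := norm_ne_zero_iff.2 (sub_ne_zero.2 hxy)
  have hx : ‖x‖ ≠ 0 := fun h0 => hxy <| by
    rw [norm_eq_zero.1 h0, norm_eq_zero.1 (h.symm.trans h0)]
  rw [dunklWilliamsRatio, NormedSpace.normalize, NormedSpace.normalize, ← h, ← smul_sub,
    norm_smul, norm_inv, norm_norm]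
  field_simp
  ring

theorem dunklWilliamsSphereRatio_self {u : X} (hu : u ≠ 0) {t : ℝ} (ht : 0 ≤ t) :
    dunklWilliamsSphereRatio u u t = 2 := by
  have h1t : (0 : ℝ) < 1 + t := by linarith
  have hsum : u + t • u = (1 + t) • u := by rw [add_smul, one_smul]
  rw [dunklWilliamsSphereRatio, ← two_smul ℝ u, hsum, norm_smul, norm_smul,
    Real.norm_of_nonneg h1t.le, Real.norm_two]
  field_simp [norm_ne_zero_iff.2 hu]

theorem dunklWilliamsRatio_eq_sphereRatio {x : X} (hx : x ≠ 0) (y : X) :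
    dunklWilliamsRatio x y = dunklWilliamsSphereRatio (NormedSpace.normalize x)
      (-NormedSpace.normalize y) (‖y‖ / ‖x‖) := by
  have hx' : ‖x‖ ≠ 0 := norm_ne_zero_iff.2 hx
  have hden : NormedSpace.normalize x + (‖y‖ / ‖x‖) • -NormedSpace.normalize y =
      ‖x‖⁻¹ • (x - y) := by
    rw [smul_neg, ← sub_eq_add_neg, NormedSpace.normalize, NormedSpace.normalize, smul_smul,
      smul_sub]
    by_cases hy : y = 0
    · simp [hy]
    · rw [div_mul_eq_mul_div, mul_inv_cancel₀ (norm_ne_zero_iff.2 hy), one_div]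
  rw [dunklWilliamsRatio, dunklWilliamsSphereRatio, hden, ← sub_eq_add_neg, norm_smul,
    norm_inv, norm_norm]
  field_simp

open NormedSpace in
theorem dunklWilliamsSphereRatio_eq_ratio {u v : X} (hu : ‖u‖ = 1) (hv : ‖v‖ = 1) {t : ℝ}
    (ht : 0 < t) : dunklWilliamsSphereRatio u v t = dunklWilliamsRatio u (-(t • v)) := by
  have hu0 : u ≠ 0 := norm_ne_zero_iff.1 (by rw [hu]; exact one_ne_zero)
  rw [dunklWilliamsRatio_eq_sphereRatio hu0, normalize_neg, normalize_smul_of_pos ht,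
    normalize_eq_self_of_norm_eq_one hu, normalize_eq_self_of_norm_eq_one hv, neg_neg, norm_neg,
    norm_smul, Real.norm_of_nonneg ht.le, hv, hu, mul_one, div_one]

end

open NormedSpace in
theorem dunkl_williams_eq_DW5_general {X : Type*} [NormedAddCommGroup X] [NormedSpace ℝ X] :
    sSup {c : ℝ | ∃ x y : X, x ≠ 0 ∧ y ≠ 0 ∧ x ≠ y ∧
      c = (‖x‖ + ‖y‖) / ‖x - y‖ * ‖‖x‖⁻¹ • x - ‖y‖⁻¹ • y‖} =
    sSup {c : ℝ | ∃ u v : X, ∃ t : ℝ, ‖u‖ = 1 ∧ ‖v‖ = 1 ∧ 0 < t ∧ t < 1 ∧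
      c = (1 + t) * ‖u + v‖ / ‖u + t • v‖} := by
  congr 1
  ext c
  constructor
  · rintro ⟨x, y, hx, hy, hxy, rfl⟩
    change ∃ u v : X, ∃ t : ℝ, _ ∧ _ ∧ _ ∧ _ ∧
      dunklWilliamsRatio x y = dunklWilliamsSphereRatio u v t
    wlog hle : ‖y‖ ≤ ‖x‖ generalizing x y
    · rw [dunklWilliamsRatio_comm]
      exact this y x hy hx hxy.symm (le_of_not_ge hle)
    rcases hle.eq_or_lt with heq | hlt
    · refine ⟨normalize x, normalize x, 1 / 2, norm_normalize hx, norm_normalize hx,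
        by norm_num, by norm_num, ?_⟩
      rw [dunklWilliamsRatio_of_norm_eq hxy heq.symm,
        dunklWilliamsSphereRatio_self ((normalize_eq_zero_iff x).not.2 hx) (by norm_num)]
    · refine ⟨normalize x, -normalize y, ‖y‖ / ‖x‖, norm_normalize hx,
        by rw [norm_neg, norm_normalize hy], by positivity,
        (div_lt_one (norm_pos_iff.2 hx)).2 hlt, dunklWilliamsRatio_eq_sphereRatio hx y⟩
  · rintro ⟨u, v, t, hu, hv, ht0, ht1, rfl⟩
    have hw : ‖-(t • v)‖ = t := by
      rw [norm_neg, norm_smul, Real.norm_of_nonneg ht0.le, hv, mul_one]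
    exact ⟨u, -(t • v), norm_ne_zero_iff.1 (by rw [hu]; exact one_ne_zero),
      norm_ne_zero_iff.1 (by rw [hw]; exact ht0.ne'),
      ne_of_apply_ne norm (by rw [hu, hw]; exact ht1.ne'),
      dunklWilliamsSphereRatio_eq_ratio hu hv ht0⟩

/-- `DW(X) = sup { (1+t)‖u+v‖ / ‖u+tv‖ : u, v ∈ S_X, 0 < t < 1 }`. -/
theorem dunkl_williams_eq_DW5 {X : Type*} [NormedAddCommGroup X] [NormedSpace ℝ X]
    [Nontrivial X] :
    sSup {c : ℝ | ∃ x y : X, x ≠ 0 ∧ y ≠ 0 ∧ x ≠ y ∧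
      c = (‖x‖ + ‖y‖) / ‖x - y‖ * ‖‖x‖⁻¹ • x - ‖y‖⁻¹ • y‖} =
    sSup {c : ℝ | ∃ u v : X, ∃ t : ℝ, ‖u‖ = 1 ∧ ‖v‖ = 1 ∧ 0 < t ∧ t < 1 ∧
      c = (1 + t) * ‖u + v‖ / ‖u + t • v‖} :=
  dunkl_williams_eq_DW5_general
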